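/- Let a ∈ (0,1], let S ⊆ Lim(ω₁) be stationary, and let ⟨A_δ : δ ∈ S⟩, with A_δ = {α_{δ,n} : n < ω} strictly increasing cofinal in δ, witness ♣_S^{inf≥a}. For Y ⊆ ω₁ let S(Y) = {δ ∈ S : liminf_n |{k < n : α_{δ,k} ∈ Y}|/n ≥ a}. Let ⟨X_i : i < ω₁⟩ be a family of pairwise disjoint uncountable subsets of ω₁. Then there exist an uncountable W ⊆ ω₁ and sets ⟨Y_i : i ∈ W⟩ with each Y_i an uncountable subset of X_i, such that for every i ∈ W and every uncountable Z ⊆ Y_i, the set S(Z) \ ⋃_{j ∈ W, j < i} S(Y_j) is stationary in ω₁. -/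

import Mathlib

open Filter Set

noncomputable def omega1 : Ordinal.{0} := (Cardinal.aleph 1).ord

/-- The set of countable limit ordinals, `Lim(ω₁)`. -/
def limOmega1 : Set Ordinal.{0} := {δ | δ < omega1 ∧ Order.IsSuccLimit δ}

/-- `C` is a closed unbounded subset of `ω₁`. -/
def IsClubIn (C : Set Ordinal.{0}) : Prop :=
  C ⊆ Set.Iio omega1 ∧
  (∀ δ, δ < omega1 → Order.IsSuccLimit δ → (∀ β < δ, ∃ γ ∈ C, β < γ ∧ γ < δ) → δ ∈ C) ∧
  (∀ β, β < omega1 → ∃ γ ∈ C, β < γ)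

/-- `S` is a stationary subset of `ω₁`. -/
def IsStatIn (S : Set Ordinal.{0}) : Prop :=
  S ⊆ Set.Iio omega1 ∧ ∀ C, IsClubIn C → (S ∩ C).Nonempty

open scoped Classical in
/-- `|{k < n : α k ∈ A}| / n` as a real number. -/
noncomputable def hitRatio (α : ℕ → Ordinal.{0}) (A : Set Ordinal.{0}) (n : ℕ) : ℝ :=
  ((Finset.range n).filter (fun k => α k ∈ A)).card / n

/-- `α` assigns to each `δ ∈ S` a strictly increasing sequence cofinal in `δ`. -/
def GoodSeq (S : Set Ordinal.{0}) (α : Ordinal.{0} → ℕ → Ordinal.{0}) : Prop :=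
  ∀ δ ∈ S, StrictMono (α δ) ∧ (∀ n, α δ n < δ) ∧ (∀ β < δ, ∃ n, β < α δ n)

/-- The principle `♣_S^{inf ≥ a}`. -/
def ClubSuitInf (S : Set Ordinal.{0}) (a : ℝ) : Prop :=
  ∃ α : Ordinal.{0} → ℕ → Ordinal.{0}, GoodSeq S α ∧
    ∀ A : Set Ordinal.{0}, A ⊆ Set.Iio omega1 → ¬ A.Countable →
      ∃ δ ∈ S, a ≤ Filter.liminf (hitRatio (α δ) A) Filter.atTop

/-- The principle `♣_S^{sup ≥ a}`. -/
def ClubSuitSup (S : Set Ordinal.{0}) (a : ℝ) : Prop :=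
  ∃ α : Ordinal.{0} → ℕ → Ordinal.{0}, GoodSeq S α ∧
    ∀ A : Set Ordinal.{0}, A ⊆ Set.Iio omega1 → ¬ A.Countable →
      ∃ δ ∈ S, a ≤ Filter.limsup (hitRatio (α δ) A) Filter.atTop

/-- The diamond principle `◊` on `ω₁`. -/
def DiamondOmega1 : Prop :=
  ∃ B : Ordinal.{0} → Set Ordinal.{0}, (∀ δ ∈ limOmega1, B δ ⊆ Set.Iio δ) ∧
    ∀ A : Set Ordinal.{0}, A ⊆ Set.Iio omega1 →
      IsStatIn {δ ∈ limOmega1 | A ∩ Set.Iio δ = B δ}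

/-!
For uncountable `Z ⊆ ω₁` the set `S(Z)` is stationary: given a club `C`, apply the
♣-sequence to the set of first points of `Z` above the points of `C`; a `δ` whose `A_δ` hits
that set infinitely often is a limit of `C`. At a given `δ`, pairwise disjoint sets of lower
density `≥ a` along `A_δ` number at most `1/a`. Hence the largest `k` such that stationarily
many `δ ∈ S(Z)` lie in `k` of the sets `S(X_j)`, `i ≤ j`, is a bounded rank `ρ_i(Z)`, monotone
in `Z`. Choose `Y_i ⊆ X_i` minimising `ρ_i`, and `W` uncountable with `ρ_i(Y_i) = r` constant on
`W`. For `Z ⊆ Y_i` and `j < i` in `W`, stationarily many points of the `r`-fold overlap set of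
`Z` inside `S(Y_j)` would force `ρ_j(Y_j) ≥ r + 1`; so removing the countably many `S(Y_j)`
from it leaves a stationary subset of `S(Z)`.
-/

open scoped Cardinal

lemma isSuccLimit_omega1 : Order.IsSuccLimit omega1 :=
  Cardinal.isSuccLimit_ord (Cardinal.aleph0_le_aleph 1)

lemma countable_Iio_of_lt_omega1 {β : Ordinal.{0}} (hβ : β < omega1) : (Iio β).Countable := by
  rw [← Cardinal.le_aleph0_iff_set_countable, Cardinal.mk_Iio_ordinal, Cardinal.lift_le_aleph0,
    ← Order.lt_succ_iff, Cardinal.succ_aleph0, ← Cardinal.lt_ord]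
  exact hβ

lemma not_countable_Iio_omega1 : ¬ (Iio omega1).Countable := by
  rw [← Cardinal.le_aleph0_iff_set_countable, Cardinal.mk_Iio_ordinal, Cardinal.lift_le_aleph0,
    omega1, Cardinal.card_ord, not_le]
  exact Cardinal.aleph0_lt_aleph_one

lemma exists_gt_of_not_countable {Z : Set Ordinal.{0}} (hZ : ¬ Z.Countable) (β : Ordinal.{0})
    (hβ : β < omega1) : ∃ z ∈ Z, β < z := by
  by_contra! h
  exact hZ ((countable_Iio_of_lt_omega1 (isSuccLimit_omega1.succ_lt hβ)).mono
    fun z hz => Order.lt_succ_iff.mpr (h z hz))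

lemma aleph0_lt_cof_Iio_omega1 : ℵ₀ < Order.cof (Iio omega1) := by
  rw [Ordinal.cof_Iio, ← Ordinal.lift_cof, omega1, Cardinal.ord_aleph, Cardinal.cof_omega_one]
  simp

/-! `IsClubIn` and `IsStatIn` are Mathlib's `IsClub` and `IsStationary` on the well-order
`Iio omega1`, transported along the inclusion into the ordinals. -/

lemma IsClubIn.isClub_preimage {C : Set Ordinal.{0}} (hC : IsClubIn C) :
    IsClub (((↑) : Iio omega1 → Ordinal.{0}) ⁻¹' C) := by
  refine ⟨fun d hdC hd _ x hx => ?_, fun x => ?_⟩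
  · by_cases hxd : x ∈ d
    · exact hdC hxd
    have hcof : ∀ β < (x : Ordinal.{0}), ∃ γ ∈ C, β < γ ∧ γ < x := by
      intro β hβ
      obtain ⟨y, hyd, hβy⟩ : ∃ y ∈ d, β < y := by
        by_contra! h
        exact hβ.not_ge (hx.2 (show ⟨β, hβ.trans x.2⟩ ∈ upperBounds d from h))
      exact ⟨y, hdC hyd, hβy, (hx.1 hyd).lt_of_ne (ne_of_mem_of_not_mem hyd hxd)⟩
    obtain ⟨y, hyd⟩ := hd
    have hx0 : ¬ IsMin (x : Ordinal.{0}) :=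
      not_isMin_of_lt (Subtype.coe_lt_coe.2 ((hx.1 hyd).lt_of_ne (ne_of_mem_of_not_mem hyd hxd)))
    refine hC.2.1 x x.2 (Order.IsSuccLimit.mk hx0 ?_) hcof
    refine Order.isSuccPrelimit_iff_succ_lt.2 fun β hβ => ?_
    obtain ⟨γ, -, hβγ, hγx⟩ := hcof β hβ
    exact (Order.succ_le_of_lt hβγ).trans_lt hγx
  · obtain ⟨γ, hγC, hxγ⟩ := hC.2.2 x x.2
    exact ⟨⟨γ, hC.1 hγC⟩, hγC, hxγ.le⟩

lemma IsClub.isClubIn_image {t : Set (Iio omega1)} (ht : IsClub t) :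
    IsClubIn (((↑) : Iio omega1 → Ordinal.{0}) '' t) := by
  refine ⟨fun _ ⟨y, _, hy⟩ => hy ▸ y.2, fun δ hδ hlim hcof => ?_, fun β hβ => ?_⟩
  · obtain ⟨γ, ⟨y, hyt, rfl⟩, -, hyδ⟩ := hcof 0 hlim.pos
    have hlub : IsLUB {y ∈ t | (y : Ordinal.{0}) < δ} ⟨δ, hδ⟩ := by
      refine ⟨fun z hz => hz.2.le, fun b hb => not_lt.1 fun hbδ => ?_⟩
      obtain ⟨γ, ⟨z, hzt, rfl⟩, hbz, hzδ⟩ := hcof b hbδ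
      exact (hb ⟨hzt, hzδ⟩).not_gt hbz
    exact ⟨_, ht.isLUB_mem (sep_subset _ _) ⟨y, hyt, hyδ⟩ hlub, rfl⟩
  · obtain ⟨y, hyt, hy⟩ := ht.isCofinal ⟨Order.succ β, isSuccLimit_omega1.succ_lt hβ⟩
    exact ⟨y, ⟨y, hyt, rfl⟩, Order.succ_le_iff.1 hy⟩

lemma isStatIn_iff_isStationary_preimage {A : Set Ordinal.{0}} (hA : A ⊆ Iio omega1) :
    IsStatIn A ↔ IsStationary (((↑) : Iio omega1 → Ordinal.{0}) ⁻¹' A) := by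
  refine ⟨fun h t ht => ?_, fun h => ⟨hA, fun C hC => ?_⟩⟩
  · obtain ⟨_, hδA, y, hyt, rfl⟩ := h.2 _ ht.isClubIn_image
    exact ⟨y, hδA, hyt⟩
  · obtain ⟨y, hyA, hyC⟩ := h hC.isClub_preimage
    exact ⟨y, hyA, hyC⟩

lemma IsClubIn.not_countable {C : Set Ordinal.{0}} (hC : IsClubIn C) : ¬ C.Countable := fun h =>
  (Order.cof_le hC.isClub_preimage.isCofinal).not_gt <| aleph0_lt_cof_Iio_omega1.trans_le'
    (Cardinal.le_aleph0_iff_set_countable.2 (h.preimage Subtype.val_injective))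

lemma IsStatIn.mono {A B : Set Ordinal.{0}} (hA : IsStatIn A) (hAB : A ⊆ B)
    (hB : B ⊆ Iio omega1) : IsStatIn B :=
  ⟨hB, fun C hC => (hA.2 C hC).mono (inter_subset_inter_left C hAB)⟩

lemma IsStatIn.nonempty {A : Set Ordinal.{0}} (hA : IsStatIn A) : A.Nonempty := by
  obtain ⟨y, hy⟩ := ((isStatIn_iff_isStationary_preimage hA.1).1 hA).nonempty
  exact ⟨y, hy⟩

/-- Countable completeness of the club filter on `ω₁`. -/
lemma IsStatIn.diff_biUnion {T J : Set Ordinal.{0}} {B : Ordinal.{0} → Set Ordinal.{0}}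
    (hT : IsStatIn T) (hJ : J.Countable) (hB : ∀ j ∈ J, ¬ IsStatIn (T ∩ B j)) :
    IsStatIn (T \ ⋃ j ∈ J, B j) := by
  have hsub : ∀ {A}, A ⊆ T → A ⊆ Iio omega1 := fun h => h.trans hT.1
  have hcof : Order.cof (Iio omega1) ≠ ℵ₀ := aleph0_lt_cof_Iio_omega1.ne'
  have := hJ.to_subtype
  rw [isStatIn_iff_isStationary_preimage (hsub sdiff_subset)]
  have hT' : IsStationary (((↑) : Iio omega1 → Ordinal.{0}) ⁻¹' (T \ ⋃ j ∈ J, B j) ∪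
      ⋃ j : J, ((↑) : Iio omega1 → Ordinal.{0}) ⁻¹' (T ∩ B j)) :=
    (isStatIn_iff_isStationary_preimage hT.1).1 hT |>.mono fun y hy => by
      by_cases h : (y : Ordinal.{0}) ∈ ⋃ j ∈ J, B j
      · obtain ⟨j, hj, hyj⟩ := mem_iUnion₂.1 h
        exact Or.inr (mem_iUnion.2 ⟨⟨j, hj⟩, hy, hyj⟩)
      · exact Or.inl ⟨hy, h⟩
  refine ((isStationary_union_iff hcof).1 hT').resolve_right fun h => ?_
  obtain ⟨⟨j, hj⟩, hst⟩ := (isStationary_iUnion_iff_of_countable hcof).1 h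
  exact hB j hj ((isStatIn_iff_isStationary_preimage (hsub inter_subset_left)).2 hst)

section hitRatio

variable {β : ℕ → Ordinal.{0}} {A B : Set Ordinal.{0}}

lemma hitRatio_nonneg (n : ℕ) : 0 ≤ hitRatio β A n := by
  unfold hitRatio
  positivity

lemma hitRatio_le_div {N : ℕ} (hN : ∀ k, N ≤ k → β k ∉ A) (n : ℕ) :
    hitRatio β A n ≤ N / n := by
  classical
  unfold hitRatio
  gcongr
  refine (Finset.card_le_card fun k hk => ?_).trans_eq (Finset.card_range N)
  rw [Finset.mem_filter] at hk
  exact Finset.mem_range.2 (not_le.1 fun hNk => hN k hNk hk.2)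

lemma hitRatio_le_one (n : ℕ) : hitRatio β A n ≤ 1 := by
  classical
  unfold hitRatio
  exact div_le_one_of_le₀ (Nat.cast_le.2 ((Finset.card_filter_le _ _).trans_eq
    (Finset.card_range n))) n.cast_nonneg

lemma hitRatio_mono (h : A ⊆ B) (n : ℕ) : hitRatio β A n ≤ hitRatio β B n := by
  classical
  unfold hitRatio
  gcongr

lemma isBoundedUnder_ge_hitRatio : IsBoundedUnder (· ≥ ·) atTop (hitRatio β A) :=
  isBoundedUnder_of ⟨0, hitRatio_nonneg⟩

lemma isCoboundedUnder_ge_hitRatio : IsCoboundedUnder (· ≥ ·) atTop (hitRatio β A) :=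
  (isBoundedUnder_of ⟨1, hitRatio_le_one⟩).isCoboundedUnder_ge

lemma liminf_hitRatio_mono (h : A ⊆ B) :
    liminf (hitRatio β A) atTop ≤ liminf (hitRatio β B) atTop :=
  liminf_le_liminf (.of_forall (hitRatio_mono h)) isBoundedUnder_ge_hitRatio
    isCoboundedUnder_ge_hitRatio

lemma frequently_mem_of_pos_liminf_hitRatio (h : 0 < liminf (hitRatio β A) atTop) :
    ∃ᶠ k in atTop, β k ∈ A := by
  refine fun hA => h.not_ge ?_
  obtain ⟨N, hN⟩ := eventually_atTop.1 hA
  calc liminf (hitRatio β A) atTop ≤ liminf (fun n : ℕ => (N : ℝ) / n) atTop :=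
        liminf_le_liminf (.of_forall (hitRatio_le_div hN)) isBoundedUnder_ge_hitRatio
          (tendsto_const_div_atTop_nhds_zero_nat (N : ℝ)).isBoundedUnder_le.isCoboundedUnder_ge
    _ = 0 := (tendsto_const_div_atTop_nhds_zero_nat (N : ℝ)).liminf_eq

lemma sum_hitRatio_le_one {X : Ordinal.{0} → Set Ordinal.{0}} {G : Finset Ordinal.{0}}
    (hG : (G : Set Ordinal.{0}).PairwiseDisjoint X) (n : ℕ) :
    ∑ j ∈ G, hitRatio β (X j) n ≤ 1 := by
  classical
  unfold hitRatio
  rw [← Finset.sum_div, ← Nat.cast_sum, ← Finset.card_biUnion]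
  · exact div_le_one_of_le₀ (Nat.cast_le.2 ((Finset.card_le_card
      (Finset.biUnion_subset.2 fun j _ => Finset.filter_subset _ _)).trans_eq
      (Finset.card_range n))) n.cast_nonneg
  · intro j hj l hl hjl
    exact Finset.disjoint_filter.2 fun k _ hkj hkl => Set.disjoint_left.1 (hG hj hl hjl) hkj hkl

lemma card_mul_le_one_of_lt_liminf_hitRatio {X : Ordinal.{0} → Set Ordinal.{0}}
    {G : Finset Ordinal.{0}} (hG : (G : Set Ordinal.{0}).PairwiseDisjoint X) {c : ℝ}
    (hc : ∀ j ∈ G, c < liminf (hitRatio β (X j)) atTop) : G.card * c ≤ 1 := by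
  obtain ⟨n, hn⟩ := ((Filter.eventually_all_finset G).2 fun j hj =>
    eventually_lt_of_lt_liminf (hc j hj) isBoundedUnder_ge_hitRatio).exists
  calc G.card * c = ∑ _j ∈ G, c := by rw [Finset.sum_const, nsmul_eq_mul]
    _ ≤ ∑ j ∈ G, hitRatio β (X j) n := Finset.sum_le_sum fun j hj => (hn j hj).le
    _ ≤ 1 := sum_hitRatio_le_one hG n

end hitRatio

noncomputable def nextAbove (Z : Set Ordinal.{0}) (c : Ordinal.{0}) : Ordinal.{0} :=
  sInf {z ∈ Z | c < z}

section nextAbove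

variable {Z C : Set Ordinal.{0}} {c : Ordinal.{0}}

lemma nextAbove_mem_gt (h : ∃ z ∈ Z, c < z) : nextAbove Z c ∈ Z ∧ c < nextAbove Z c :=
  csInf_mem h

lemma nextAbove_le {z : Ordinal.{0}} (hz : z ∈ Z) (hcz : c < z) : nextAbove Z c ≤ z :=
  csInf_le' ⟨hz, hcz⟩

lemma image_nextAbove_subset (hZ : ¬ Z.Countable) (hC : C ⊆ Iio omega1) :
    nextAbove Z '' C ⊆ Z :=
  image_subset_iff.2 fun c hc => (nextAbove_mem_gt (exists_gt_of_not_countable hZ c (hC hc))).1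

lemma not_countable_image_nextAbove (hZ : Z ⊆ Iio omega1) (hZc : ¬ Z.Countable)
    (hC : IsClubIn C) : ¬ (nextAbove Z '' C).Countable := fun h =>
  hC.not_countable <| (h.biUnion fun _ hz =>
    countable_Iio_of_lt_omega1 (hZ (image_nextAbove_subset hZc hC.1 hz))).mono fun c hc =>
      mem_biUnion (mem_image_of_mem _ hc)
        (nextAbove_mem_gt (exists_gt_of_not_countable hZc c (hC.1 hc))).2

/-- Between two consecutive hits of `nextAbove Z '' C` by the sequence `s` lies a point of `C`,
so a limit `δ` approached by `s` with infinitely many such hits is a limit point of `C`. -/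
lemma IsClubIn.mem_of_frequently_mem_image_nextAbove (hC : IsClubIn C) (hZ : ¬ Z.Countable)
    {δ : Ordinal.{0}} (hδ : δ ∈ limOmega1) {s : ℕ → Ordinal.{0}} (hs : StrictMono s)
    (hsδ : ∀ n, s n < δ) (hcof : ∀ β < δ, ∃ n, β < s n)
    (hfreq : ∃ᶠ k in atTop, s k ∈ nextAbove Z '' C) : δ ∈ C := by
  refine hC.2.1 δ hδ.1 hδ.2 fun b hb => ?_
  obtain ⟨n, hbn⟩ := hcof b hb
  obtain ⟨k₁, hnk₁, hk₁⟩ := frequently_atTop.1 hfreq n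
  obtain ⟨k₂, hk₁₂, c, hcC, hk₂⟩ := frequently_atTop.1 hfreq (k₁ + 1)
  have hk₁Z : s k₁ ∈ Z := image_nextAbove_subset hZ hC.1 hk₁
  have hc := nextAbove_mem_gt (exists_gt_of_not_countable hZ c (hC.1 hcC))
  refine ⟨c, hcC, hbn.trans_le ((hs.monotone hnk₁).trans (not_lt.1 fun hc₁ => ?_)), ?_⟩
  · exact (hs hk₁₂).not_ge (hk₂ ▸ nextAbove_le hk₁Z hc₁)
  · exact hc.2.trans (hk₂ ▸ hsδ k₂)

end nextAbove

/-- The set `S(Y)` of the statement. -/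
def densitySet (a : ℝ) (S : Set Ordinal.{0}) (α : Ordinal.{0} → ℕ → Ordinal.{0})
    (Y : Set Ordinal.{0}) : Set Ordinal.{0} :=
  {δ ∈ S | a ≤ liminf (hitRatio (α δ) Y) atTop}

section densitySet

variable {a : ℝ} {S : Set Ordinal.{0}} {α : Ordinal.{0} → ℕ → Ordinal.{0}}
  {Y Z : Set Ordinal.{0}}

lemma densitySet_mono (h : Y ⊆ Z) : densitySet a S α Y ⊆ densitySet a S α Z :=
  fun _ hδ => ⟨hδ.1, hδ.2.trans (liminf_hitRatio_mono h)⟩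

lemma densitySet_subset_Iio (hS : S ⊆ Iio omega1) : densitySet a S α Y ⊆ Iio omega1 :=
  fun _ hδ => hS hδ.1

lemma isStatIn_densitySet (ha : 0 < a) (hS : S ⊆ limOmega1) (hα : GoodSeq S α)
    (hwit : ∀ A : Set Ordinal.{0}, A ⊆ Iio omega1 → ¬ A.Countable →
      ∃ δ ∈ S, a ≤ liminf (hitRatio (α δ) A) atTop)
    (hZ : Z ⊆ Iio omega1) (hZc : ¬ Z.Countable) : IsStatIn (densitySet a S α Z) := by
  refine ⟨densitySet_subset_Iio fun δ hδ => (hS hδ).1, fun C hC => ?_⟩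
  have hsub := image_nextAbove_subset hZc hC.1
  obtain ⟨δ, hδS, hδ⟩ := hwit _ (hsub.trans hZ) (not_countable_image_nextAbove hZ hZc hC)
  obtain ⟨hmono, hlt, hcof⟩ := hα δ hδS
  exact ⟨δ, densitySet_mono hsub ⟨hδS, hδ⟩, hC.mem_of_frequently_mem_image_nextAbove hZc (hS hδS)
    hmono hlt hcof (frequently_mem_of_pos_liminf_hitRatio (ha.trans_le hδ))⟩

end densitySet

def overlapSet (a : ℝ) (S : Set Ordinal.{0}) (α : Ordinal.{0} → ℕ → Ordinal.{0})
    (X : Ordinal.{0} → Set Ordinal.{0}) (i : Ordinal.{0}) (Z : Set Ordinal.{0}) (k : ℕ) :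
    Set Ordinal.{0} :=
  {δ ∈ densitySet a S α Z | ∃ G : Finset Ordinal.{0}, G.card = k ∧
    ∀ j ∈ G, i ≤ j ∧ j < omega1 ∧ δ ∈ densitySet a S α (X j)}

noncomputable def overlapRank (a : ℝ) (S : Set Ordinal.{0})
    (α : Ordinal.{0} → ℕ → Ordinal.{0}) (X : Ordinal.{0} → Set Ordinal.{0}) (i : Ordinal.{0})
    (Z : Set Ordinal.{0}) : ℕ :=
  sSup {k | IsStatIn (overlapSet a S α X i Z k)}

section overlapRank

variable {a : ℝ} {S : Set Ordinal.{0}} {α : Ordinal.{0} → ℕ → Ordinal.{0}}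
  {X : Ordinal.{0} → Set Ordinal.{0}} {i j : Ordinal.{0}} {Y Z : Set Ordinal.{0}} {k : ℕ}

lemma overlapSet_zero : overlapSet a S α X i Z 0 = densitySet a S α Z :=
  sep_eq_self_iff_mem_true.2 fun _ _ => ⟨∅, rfl, by simp⟩

lemma overlapSet_mono (h : Y ⊆ Z) : overlapSet a S α X i Y k ⊆ overlapSet a S α X i Z k :=
  fun _ hδ => ⟨densitySet_mono h hδ.1, hδ.2⟩

lemma overlapSet_subset_Iio (hS : S ⊆ Iio omega1) : overlapSet a S α X i Z k ⊆ Iio omega1 :=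
  fun _ hδ => hS hδ.1.1

lemma le_of_mem_overlapSet (ha : 0 < a) (hX : (Iio omega1).PairwiseDisjoint X) {δ : Ordinal.{0}}
    (hδ : δ ∈ overlapSet a S α X i Z k) : k ≤ ⌊2 / a⌋₊ := by
  obtain ⟨-, G, rfl, hG⟩ := hδ
  have := card_mul_le_one_of_lt_liminf_hitRatio (hX.subset fun j hj => (hG j hj).2.1)
    fun j hj => (half_lt_self ha).trans_le (hG j hj).2.2.2
  rw [Nat.le_floor_iff (by positivity), le_div_iff₀ ha]
  linarith

lemma bddAbove_setOf_isStatIn_overlapSet (ha : 0 < a) (hX : (Iio omega1).PairwiseDisjoint X) :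
    BddAbove {k | IsStatIn (overlapSet a S α X i Z k)} :=
  ⟨_, fun _ hk => le_of_mem_overlapSet ha hX hk.nonempty.some_mem⟩

lemma le_overlapRank (ha : 0 < a) (hX : (Iio omega1).PairwiseDisjoint X)
    (h : IsStatIn (overlapSet a S α X i Z k)) : k ≤ overlapRank a S α X i Z :=
  le_csSup (bddAbove_setOf_isStatIn_overlapSet ha hX) h

lemma isStatIn_overlapSet_overlapRank (ha : 0 < a) (hX : (Iio omega1).PairwiseDisjoint X)
    (hZ : IsStatIn (densitySet a S α Z)) :
    IsStatIn (overlapSet a S α X i Z (overlapRank a S α X i Z)) :=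
  Nat.sSup_mem ⟨0, show IsStatIn _ from overlapSet_zero (X := X) (i := i) ▸ hZ⟩
    (bddAbove_setOf_isStatIn_overlapSet ha hX)

lemma overlapRank_mono (ha : 0 < a) (hS : S ⊆ Iio omega1) (hX : (Iio omega1).PairwiseDisjoint X)
    (h : Y ⊆ Z) (hY : IsStatIn (densitySet a S α Y)) :
    overlapRank a S α X i Y ≤ overlapRank a S α X i Z :=
  le_overlapRank ha hX ((isStatIn_overlapSet_overlapRank ha hX hY).mono (overlapSet_mono h)
    (overlapSet_subset_Iio hS))

lemma overlapSet_inter_densitySet_subset (hji : j < i) (hj : j < omega1) (hY : Y ⊆ X j) :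
    overlapSet a S α X i Z k ∩ densitySet a S α Y ⊆ overlapSet a S α X j Y (k + 1) := by
  rintro δ ⟨⟨-, G, rfl, hG⟩, hδY⟩
  refine ⟨hδY, insert j G, Finset.card_insert_of_notMem fun hjG => (hG j hjG).1.not_gt hji, ?_⟩
  intro l hl
  rcases Finset.mem_insert.1 hl with rfl | hlG
  · exact ⟨le_rfl, hj, densitySet_mono hY hδY⟩
  · exact ⟨hji.le.trans (hG l hlG).1, (hG l hlG).2⟩

lemma not_isStatIn_overlapSet_inter_densitySet (ha : 0 < a) (hS : S ⊆ Iio omega1)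
    (hX : (Iio omega1).PairwiseDisjoint X) (hji : j < i) (hj : j < omega1) (hY : Y ⊆ X j)
    (hk : overlapRank a S α X j Y ≤ k) :
    ¬ IsStatIn (overlapSet a S α X i Z k ∩ densitySet a S α Y) := fun h =>
  (le_overlapRank ha hX (h.mono (overlapSet_inter_densitySet_subset hji hj hY)
    (overlapSet_subset_Iio hS))).not_gt (Nat.lt_succ_of_le hk)

end overlapRank

lemma exists_subset_forall_le {β : Type*} (f : Set β → ℕ) {P : Set β → Prop} {X : Set β}
    (hX : P X) : ∃ Y ⊆ X, P Y ∧ ∀ Z ⊆ Y, P Z → f Y ≤ f Z := by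
  have hne : {Y | Y ⊆ X ∧ P Y}.Nonempty := ⟨X, subset_rfl, hX⟩
  obtain ⟨Y, ⟨hYX, hY⟩, hmin⟩ := (InvImage.wf f wellFounded_lt).has_min _ hne
  exact ⟨Y, hYX, hY, fun Z hZY hZ => not_lt.1 (hmin Z ⟨hZY.trans hYX, hZ⟩)⟩

lemma exists_not_countable_fiber {β γ : Type*} [Countable γ] {A : Set β} (hA : ¬ A.Countable)
    (f : β → γ) : ∃ r, ¬ {i ∈ A | f i = r}.Countable := by
  by_contra! h
  refine hA ((countable_iUnion h).mono fun i hi => ?_)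
  exact mem_iUnion_of_mem (f i) ⟨hi, rfl⟩

theorem clubSuitInf_claim_64_general (a : ℝ) (ha0 : 0 < a)
    (S : Set Ordinal.{0}) (hS : S ⊆ limOmega1)
    (α : Ordinal.{0} → ℕ → Ordinal.{0}) (hα : GoodSeq S α)
    (hwit : ∀ A : Set Ordinal.{0}, A ⊆ Set.Iio omega1 → ¬ A.Countable →
      ∃ δ ∈ S, a ≤ Filter.liminf (hitRatio (α δ) A) Filter.atTop)
    (X : Ordinal.{0} → Set Ordinal.{0})
    (hX : ∀ i, i < omega1 → X i ⊆ Set.Iio omega1 ∧ ¬ (X i).Countable)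
    (hdisj : ∀ i, i < omega1 → ∀ j, j < omega1 → i ≠ j → Disjoint (X i) (X j)) :
    ∃ W : Set Ordinal.{0}, W ⊆ Set.Iio omega1 ∧ ¬ W.Countable ∧
      ∃ Y : Ordinal.{0} → Set Ordinal.{0},
        (∀ i ∈ W, Y i ⊆ X i ∧ ¬ (Y i).Countable) ∧
        ∀ i ∈ W, ∀ Z : Set Ordinal.{0}, Z ⊆ Y i → ¬ Z.Countable →
          IsStatIn ({δ ∈ S | a ≤ Filter.liminf (hitRatio (α δ) Z) Filter.atTop} \
            ⋃ j ∈ W ∩ Set.Iio i,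
              {δ ∈ S | a ≤ Filter.liminf (hitRatio (α δ) (Y j)) Filter.atTop}) := by
  have hS' : S ⊆ Iio omega1 := fun δ hδ => (hS hδ).1
  have hXd : (Iio omega1).PairwiseDisjoint X := fun i hi j hj => hdisj i hi j hj
  choose! Y hYX hY hYmin using fun i (hi : i < omega1) =>
    exists_subset_forall_le (overlapRank a S α X i) (P := fun Y => ¬ Y.Countable) (hX i hi).2
  obtain ⟨r, hr⟩ := exists_not_countable_fiber not_countable_Iio_omega1
    fun i => overlapRank a S α X i (Y i)
  refine ⟨_, sep_subset _ _, hr, Y, fun i hi => ⟨hYX i hi.1, hY i hi.1⟩, ?_⟩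
  rintro i ⟨hi, rfl⟩ Z hZY hZc
  have hZ : IsStatIn (densitySet a S α Z) :=
    isStatIn_densitySet ha0 hS hα hwit (hZY.trans ((hYX i hi).trans (hX i hi).1)) hZc
  have hrank : overlapRank a S α X i Z = overlapRank a S α X i (Y i) :=
    (overlapRank_mono ha0 hS' hXd hZY hZ).antisymm (hYmin i hi Z hZY hZc)
  refine ((hrank ▸ isStatIn_overlapSet_overlapRank ha0 hXd hZ).diff_biUnion
    ((countable_Iio_of_lt_omega1 hi).mono inter_subset_right) fun j hj => ?_).mono
      (sdiff_subset_sdiff_left (sep_subset _ _)) (sdiff_subset.trans (densitySet_subset_Iio hS'))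
  obtain ⟨⟨hj, hjr⟩, hji⟩ := hj
  exact not_isStatIn_overlapSet_inter_densitySet ha0 hS' hXd hji hj (hYX j hj) hjr.le

/-- Claim 6.4: let `⟨A_δ : δ ∈ S⟩` (given by the cofinal enumerations `α δ`) witness
`♣_S^{inf ≥ a}` and, for `Y ⊆ ω₁`, let `S(Y)` be the set of `δ ∈ S` where the liminf of
the hit ratio of `Y` along `α δ` is `≥ a`.  Given pairwise disjoint uncountable sets
`⟨X_i : i < ω₁⟩` of subsets of `ω₁`, there are an uncountable `W ⊆ ω₁` and uncountable
`Y_i ⊆ X_i` for `i ∈ W` such that for every `i ∈ W` and every uncountable `Z ⊆ Y_i`,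
the set `S(Z) \ ⋃_{j ∈ W, j < i} S(Y_j)` is stationary. -/
theorem clubSuitInf_claim_64 (a : ℝ) (ha0 : 0 < a) (ha1 : a ≤ 1)
    (S : Set Ordinal.{0}) (hS : S ⊆ limOmega1) (hstat : IsStatIn S)
    (α : Ordinal.{0} → ℕ → Ordinal.{0}) (hα : GoodSeq S α)
    (hwit : ∀ A : Set Ordinal.{0}, A ⊆ Set.Iio omega1 → ¬ A.Countable →
      ∃ δ ∈ S, a ≤ Filter.liminf (hitRatio (α δ) A) Filter.atTop)
    (X : Ordinal.{0} → Set Ordinal.{0})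
    (hX : ∀ i, i < omega1 → X i ⊆ Set.Iio omega1 ∧ ¬ (X i).Countable)
    (hdisj : ∀ i, i < omega1 → ∀ j, j < omega1 → i ≠ j → Disjoint (X i) (X j)) :
    ∃ W : Set Ordinal.{0}, W ⊆ Set.Iio omega1 ∧ ¬ W.Countable ∧
      ∃ Y : Ordinal.{0} → Set Ordinal.{0},
        (∀ i ∈ W, Y i ⊆ X i ∧ ¬ (Y i).Countable) ∧
        ∀ i ∈ W, ∀ Z : Set Ordinal.{0}, Z ⊆ Y i → ¬ Z.Countable →
          IsStatIn ({δ ∈ S | a ≤ Filter.liminf (hitRatio (α δ) Z) Filter.atTop} \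
            ⋃ j ∈ W ∩ Set.Iio i,
              {δ ∈ S | a ≤ Filter.liminf (hitRatio (α δ) (Y j)) Filter.atTop}) :=
  clubSuitInf_claim_64_general a ha0 S hS α hα hwit X hX hdisj
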